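/- arXiv:1801.10387 — 2 statements merged into one kernel-verified Lean document; each statement's English description precedes it below -/
import Mathlib

section
/- For the graphon G from the recursive diagonal construction, the black set G⁻¹({1}) is dense in [0,1]², and the white set G⁻¹({0}) is nowhere dense; consequently G is not almost everywhere continuous with respect to the standard topology, since G⁻¹({0}) is a nowhere dense set of positive Lebesgue measure. -/
open MeasureTheory

noncomputable def muI : Measure ℝ := volume.restrict (Set.Icc 0 1)

noncomputable def mu2 : Measure (ℝ × ℝ) := muI.prod muI

/-- Cumulative exponent: at stage `n` of the construction the dyadic squares have side
`2 ^ (-(1 + 2 + ⋯ + n))`. -/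
def cexp (n : ℕ) : ℕ := n * (n + 1) / 2

/-- The stage-`n` sub-index of `x`: the position (among the `2ⁿ` subintervals) of `x`
within its stage-`(n-1)` dyadic interval. -/
noncomputable def idx (n : ℕ) (x : ℝ) : ℤ := ⌊x * 2 ^ cexp n⌋ % 2 ^ n

open Classical in
/-- The recursive diagonal graphon: at each stage `n ≥ 1`, within each still-white dyadic
square, the `2ⁿ` diagonal dyadic subsquares are colored black (value `1`); a point stays
white (value `0`) iff its sub-indices differ at every stage. -/
noncomputable def diagGraphon (p : ℝ × ℝ) : ℝ :=
  if ∀ n : ℕ, 1 ≤ n → idx n p.1 ≠ idx n p.2 then 0 else 1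

/-!
Every point of `[0,1]²` lies in a closed stage-`m` dyadic square, and the corner subsquare of
stage `m + 1` on its diagonal is black; so arbitrarily close to any point there is an open black
square of positive measure. This gives density of the black set and nowhere density of the white
set, and, once the white set is known to have positive measure, it also rules out continuity on
a conull set. The stage-`n` diagonal has measure `2⁻ⁿ`, so the union bound only gives black
measure at most `∑ 2⁻ⁿ = 1`; the overlap `(0, 1/8)²` of the first two stages makes it strict.
-/

open Set Metric
open scoped ENNReal

lemma cexp_succ (n : ℕ) : cexp (n + 1) = cexp n + (n + 1) := by
  unfold cexp
  rw [show (n + 1) * (n + 1 + 1) = n * (n + 1) + (n + 1) * 2 by ring,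
    Nat.add_mul_div_right _ _ two_pos]

lemma le_cexp (n : ℕ) : n ≤ cexp n := by
  cases n with
  | zero => exact le_rfl
  | succ n => rw [cexp_succ]; omega

lemma measurable_idx (n : ℕ) : Measurable (idx n) :=
  (measurable_of_countable fun z : ℤ => z % 2 ^ n).comp
    (Int.measurable_floor.comp (measurable_id.mul_const _))

lemma idx_nonneg (n : ℕ) (x : ℝ) : 0 ≤ idx n x := Int.emod_nonneg _ (by positivity)

lemma idx_lt (n : ℕ) (x : ℝ) : idx n x < 2 ^ n := Int.emod_lt_of_pos _ (by positivity)

lemma idx_succ_eq_zero_of_mem (m : ℕ) (c : ℤ) {y : ℝ}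
    (hy : y ∈ Ioo ((c : ℝ) / 2 ^ cexp m) (c / 2 ^ cexp m + (2 ^ cexp (m + 1))⁻¹)) :
    idx (m + 1) y = 0 := by
  obtain ⟨h₁, h₂⟩ := hy
  have hN : (2 : ℝ) ^ cexp (m + 1) = 2 ^ cexp m * 2 ^ (m + 1) := by rw [cexp_succ, pow_add]
  have hfloor : ⌊y * 2 ^ cexp (m + 1)⌋ = c * 2 ^ (m + 1) := by
    rw [Int.floor_eq_iff, hN]
    push_cast
    constructor
    · calc (c : ℝ) * 2 ^ (m + 1) = c / 2 ^ cexp m * (2 ^ cexp m * 2 ^ (m + 1)) := by field_simp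
        _ ≤ y * (2 ^ cexp m * 2 ^ (m + 1)) := by gcongr
    · calc y * (2 ^ cexp m * 2 ^ (m + 1))
          < (c / 2 ^ cexp m + (2 ^ cexp m * 2 ^ (m + 1))⁻¹) * (2 ^ cexp m * 2 ^ (m + 1)) := by
            rw [← hN]; gcongr
        _ = c * 2 ^ (m + 1) + 1 := by field_simp
  rw [idx, hfloor, Int.mul_emod_left]

lemma exists_lt_mem_Icc_div {P : ℕ} (hP : 0 < P) {x : ℝ} (hx : x ∈ Icc (0 : ℝ) 1) :
    ∃ c : ℕ, c < P ∧ x ∈ Icc (c / P : ℝ) ((c + 1) / P) := by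
  have hP' : (0 : ℝ) < P := by exact_mod_cast hP
  rcases hx.2.lt_or_eq with hx1 | rfl
  · refine ⟨⌊x * P⌋₊, ?_, ?_, ?_⟩
    · exact (Nat.floor_lt (by nlinarith [hx.1])).2 (by nlinarith)
    · rw [div_le_iff₀ hP']; exact Nat.floor_le (by nlinarith [hx.1])
    · rw [le_div_iff₀ hP']; exact (Nat.lt_floor_add_one _).le
  · refine ⟨P - 1, by omega, ?_, ?_⟩
    · rw [div_le_one hP']; exact_mod_cast Nat.sub_le P 1
    · rw [Nat.cast_sub hP, Nat.cast_one, sub_add_cancel, div_self hP'.ne']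

lemma muI_eq_restrict_Ico : muI = volume.restrict (Ico 0 1) :=
  Measure.restrict_congr_set Ico_ae_eq_Icc.symm

instance : IsProbabilityMeasure muI :=
  ⟨by rw [muI, Measure.restrict_apply_univ, Real.volume_Icc, sub_zero, ENNReal.ofReal_one]⟩

instance : IsProbabilityMeasure mu2 := by
  rw [mu2]; infer_instance

lemma muI_ne_zero_of_isOpen {I : Set ℝ} (hI : IsOpen I) (hne : I.Nonempty)
    (hsub : I ⊆ Icc 0 1) : muI I ≠ 0 := by
  rw [muI, Measure.restrict_eq_self _ hsub]
  exact hI.measure_ne_zero volume hne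

lemma volume_setOf_floor_mul_eq {N : ℕ} (hN : 0 < N) (k : ℤ) :
    volume {y : ℝ | ⌊y * N⌋ = k} = (N : ℝ≥0∞)⁻¹ := by
  have hN' : (N : ℝ) ≠ 0 := by positivity
  change volume ((· * (N : ℝ)) ⁻¹' (Int.floor ⁻¹' {k})) = _
  rw [Real.volume_preimage_mul_right hN', Int.preimage_floor_singleton, Real.volume_Ico,
    add_sub_cancel_left, ENNReal.ofReal_one, mul_one, abs_inv, Nat.abs_cast,
    ENNReal.ofReal_inv_of_pos (by positivity), ENNReal.ofReal_natCast]

lemma volume_Ico_floor_mul_emod_eq {N M r : ℕ} (hN : 0 < N) (hMN : M ∣ N) (hr : r < M) :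
    volume {y ∈ Ico (0 : ℝ) 1 | ⌊y * N⌋ % M = r} = (M : ℝ≥0∞)⁻¹ := by
  have hN' : (0 : ℝ) < N := by exact_mod_cast hN
  have hset : {y ∈ Ico (0 : ℝ) 1 | ⌊y * N⌋ % M = r} =
      ⋃ k ∈ (Finset.range N).filter (· ≡ r [MOD M]), {y : ℝ | ⌊y * N⌋ = k} := by
    ext y
    simp only [mem_ofPred_eq, mem_Ico, Finset.mem_filter, Finset.mem_range, mem_iUnion,
      exists_prop, Nat.ModEq, Nat.mod_eq_of_lt hr]
    constructor
    · rintro ⟨⟨hy0, hy1⟩, hmod⟩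
      obtain ⟨k, hk⟩ := Int.eq_ofNat_of_zero_le (Int.floor_nonneg.2 (by positivity : 0 ≤ y * N))
      have hkN : (k : ℤ) < N := hk ▸ Int.floor_lt.2 (by push_cast; nlinarith)
      rw [hk] at hmod
      exact ⟨k, ⟨by exact_mod_cast hkN, by exact_mod_cast hmod⟩, hk⟩
    · rintro ⟨k, ⟨hkN, hkr⟩, hk⟩
      have hkN' : (k : ℝ) + 1 ≤ N := by exact_mod_cast hkN
      obtain ⟨hk₁, hk₂⟩ := Int.floor_eq_iff.1 hk
      push_cast at hk₁ hk₂
      refine ⟨⟨?_, ?_⟩, by rw [hk]; exact_mod_cast hkr⟩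
      · nlinarith [(Nat.cast_nonneg k : (0 : ℝ) ≤ k)]
      · nlinarith
  obtain ⟨K, rfl⟩ := hMN
  have hK : (K : ℝ≥0∞) ≠ 0 := Nat.cast_ne_zero.2 (by rintro rfl; simp at hN)
  rw [hset, measure_biUnion_finset,
    Finset.sum_congr rfl fun (k : ℕ) _ => volume_setOf_floor_mul_eq hN k, Finset.sum_const,
    nsmul_eq_mul, ← Nat.count_eq_card_filter_range, Nat.count_modEq_card _ (by omega),
    Nat.mul_div_cancel_left K (by omega), Nat.mul_mod_right, if_neg (Nat.not_lt_zero _), add_zero,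
    Nat.cast_mul, ENNReal.mul_inv (Or.inr (ENNReal.natCast_ne_top K))
      (Or.inl (ENNReal.natCast_ne_top M)),
    mul_left_comm, ENNReal.mul_inv_cancel hK (ENNReal.natCast_ne_top K), mul_one]
  · intro i _ j _ hij
    exact Set.disjoint_left.2 fun y h₁ h₂ => hij (by exact_mod_cast h₁.symm.trans h₂)
  · intro k _
    exact measurableSet_eq_fun (Int.measurable_floor.comp (measurable_id.mul_const _))
      measurable_const

lemma muI_setOf_idx_eq (n : ℕ) {r : ℤ} (hr₀ : 0 ≤ r) (hr : r < 2 ^ n) :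
    muI {y | idx n y = r} = (2 ^ n : ℝ≥0∞)⁻¹ := by
  lift r to ℕ using hr₀
  have hset : {y | idx n y = r} ∩ Ico 0 1 =
      {y ∈ Ico (0 : ℝ) 1 | ⌊y * (2 ^ cexp n : ℕ)⌋ % (2 ^ n : ℕ) = r} := by
    ext y
    simp only [idx, mem_inter_iff, mem_ofPred_eq, Nat.cast_pow, Nat.cast_ofNat]
    exact and_comm
  rw [muI_eq_restrict_Ico, Measure.restrict_apply' measurableSet_Ico,
    hset, volume_Ico_floor_mul_emod_eq (by positivity) (pow_dvd_pow 2 (le_cexp n))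
      (by exact_mod_cast hr)]
  push_cast
  rfl

def diagStage (n : ℕ) : Set (ℝ × ℝ) := {p | idx n p.1 = idx n p.2}

lemma measurableSet_diagStage (n : ℕ) : MeasurableSet (diagStage n) :=
  measurableSet_eq_fun ((measurable_idx n).comp measurable_fst)
    ((measurable_idx n).comp measurable_snd)

lemma mu2_diagStage (n : ℕ) : mu2 (diagStage n) = (2 ^ n : ℝ≥0∞)⁻¹ := by
  have hslice (x : ℝ) : muI (Prod.mk x ⁻¹' diagStage n) = (2 ^ n : ℝ≥0∞)⁻¹ := by
    simp only [diagStage, preimage_ofPred_eq]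
    simp_rw [eq_comm (a := idx n x)]
    exact muI_setOf_idx_eq n (idx_nonneg n x) (idx_lt n x)
  rw [mu2, Measure.prod_apply (measurableSet_diagStage n)]
  simp only [hslice, lintegral_const, measure_univ, mul_one]

lemma measure_iUnion_add_inter_le_tsum {α : Type*} [MeasurableSpace α] (μ : Measure α)
    (s : ℕ → Set α) (hs : MeasurableSet (s 1)) :
    μ (⋃ i, s i) + μ (s 0 ∩ s 1) ≤ ∑' i, μ (s i) := by
  have hunion : ⋃ i, s i = (s 0 ∪ s 1) ∪ ⋃ i, s (i + 2) := by
    rw [← union_iUnion_nat_succ, ← union_iUnion_nat_succ (fun i => s (i + 1)), union_assoc]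
  calc μ (⋃ i, s i) + μ (s 0 ∩ s 1)
      ≤ μ (s 0 ∪ s 1) + μ (⋃ i, s (i + 2)) + μ (s 0 ∩ s 1) := by
        rw [hunion]; gcongr; exact measure_union_le _ _
    _ = μ (s 0) + μ (s 1) + μ (⋃ i, s (i + 2)) := by
        rw [add_right_comm, measure_union_add_inter _ hs]
    _ ≤ μ (s 0) + μ (s 1) + ∑' i, μ (s (i + 2)) := by gcongr; exact measure_iUnion_le _
    _ = ∑' i, μ (s i) := by
        symm
        rw [tsum_eq_zero_add' ENNReal.summable, tsum_eq_zero_add' ENNReal.summable, add_assoc]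

lemma inter_nonempty_of_measure_eq_one {α : Type*} [MeasurableSpace α] {μ : Measure α}
    [IsProbabilityMeasure μ] {X Q : Set α} (hX : μ X = 1) (hQ : MeasurableSet Q)
    (hQ₀ : μ Q ≠ 0) : (X ∩ Q).Nonempty :=
  nonempty_inter_of_measure_lt_add μ hQ (subset_univ X) (subset_univ Q)
    (by rw [measure_univ, hX]; exact ENNReal.lt_add_right ENNReal.one_ne_top hQ₀)

lemma exists_inv_two_pow_cexp_lt {ε : ℝ} (hε : 0 < ε) : ∃ m, ((2 : ℝ) ^ cexp m)⁻¹ < ε := by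
  obtain ⟨m, hm⟩ := exists_pow_lt_of_lt_one hε (by norm_num : (2 : ℝ)⁻¹ < 1)
  refine ⟨m, lt_of_le_of_lt ?_ hm⟩
  rw [inv_pow]
  exact inv_anti₀ (by positivity) (pow_le_pow_right₀ one_le_two (le_cexp m))

lemma exists_isOpen_subset_Icc_idx_succ_eq_zero {x : ℝ} (hx : x ∈ Icc (0 : ℝ) 1) (m : ℕ) :
    ∃ I : Set ℝ, IsOpen I ∧ I.Nonempty ∧ I ⊆ Icc 0 1 ∩ ball x (2 ^ cexp m)⁻¹ ∧
      ∀ y ∈ I, idx (m + 1) y = 0 := by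
  obtain ⟨c, hcP, hxc⟩ := exists_lt_mem_Icc_div (P := 2 ^ cexp m) (by positivity) hx
  have hP : (0 : ℝ) < 2 ^ cexp m := by positivity
  have hc : (c : ℝ) + 1 ≤ 2 ^ cexp m := by exact_mod_cast hcP
  push_cast at hxc
  have hsub : Ioo ((c : ℝ) / 2 ^ cexp m) (c / 2 ^ cexp m + (2 ^ cexp (m + 1))⁻¹) ⊆
      Ioo ((c : ℝ) / 2 ^ cexp m) ((c + 1) / 2 ^ cexp m) := by
    refine Ioo_subset_Ioo_right ?_
    rw [add_div, one_div]
    gcongr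
    · norm_num
    · rw [cexp_succ]; omega
  refine ⟨Ioo ((c : ℝ) / 2 ^ cexp m) (c / 2 ^ cexp m + (2 ^ cexp (m + 1))⁻¹), isOpen_Ioo,
    nonempty_Ioo.2 (lt_add_of_pos_right _ (by positivity)), fun y hy => ⟨?_, ?_⟩,
    fun y hy => idx_succ_eq_zero_of_mem m c (by rwa [Int.cast_natCast])⟩
  · obtain ⟨hy₁, hy₂⟩ := hsub hy
    constructor
    · exact (div_nonneg c.cast_nonneg hP.le).trans hy₁.le
    · exact hy₂.le.trans ((div_le_one hP).2 hc)
  · obtain ⟨hy₁, hy₂⟩ := hsub hy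
    rw [mem_ball, Real.dist_eq, abs_sub_lt_iff]
    have hwidth : ((c : ℝ) + 1) / 2 ^ cexp m - c / 2 ^ cexp m = (2 ^ cexp m)⁻¹ := by
      field_simp; ring
    constructor <;> linarith [hxc.1, hxc.2]

lemma diagGraphon_eq_one_of_idx_eq {n : ℕ} (hn : 1 ≤ n) {p : ℝ × ℝ}
    (h : idx n p.1 = idx n p.2) : diagGraphon p = 1 := by
  rw [diagGraphon, if_neg fun hw => hw n hn h]

lemma exists_isOpen_black_near {p : ℝ × ℝ} (hp : p ∈ Icc (0 : ℝ) 1 ×ˢ Icc (0 : ℝ) 1) {ε : ℝ}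
    (hε : 0 < ε) :
    ∃ Q : Set (ℝ × ℝ), IsOpen Q ∧ Q ⊆ ball p ε ∧ mu2 Q ≠ 0 ∧
      Q ⊆ {q ∈ Icc (0 : ℝ) 1 ×ˢ Icc (0 : ℝ) 1 | diagGraphon q = 1} := by
  obtain ⟨m, hm⟩ := exists_inv_two_pow_cexp_lt hε
  obtain ⟨I, hIo, hIne, hI, hI0⟩ := exists_isOpen_subset_Icc_idx_succ_eq_zero hp.1 m
  obtain ⟨J, hJo, hJne, hJ, hJ0⟩ := exists_isOpen_subset_Icc_idx_succ_eq_zero hp.2 m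
  refine ⟨I ×ˢ J, hIo.prod hJo, ?_, ?_, ?_⟩
  · refine (prod_mono ?_ ?_).trans (ball_prod_same p.1 p.2 ε).subset
    · exact hI.trans (inter_subset_right.trans (ball_subset_ball hm.le))
    · exact hJ.trans (inter_subset_right.trans (ball_subset_ball hm.le))
  · rw [mu2, Measure.prod_prod]
    exact mul_ne_zero (muI_ne_zero_of_isOpen hIo hIne (hI.trans inter_subset_left))
      (muI_ne_zero_of_isOpen hJo hJne (hJ.trans inter_subset_left))
  · rintro q ⟨hq₁, hq₂⟩
    exact ⟨⟨(hI hq₁).1, (hJ hq₂).1⟩,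
      diagGraphon_eq_one_of_idx_eq (Nat.le_add_left 1 m) ((hI0 _ hq₁).trans (hJ0 _ hq₂).symm)⟩

lemma setOf_diagGraphon_eq_zero :
    {p | diagGraphon p = 0} = (⋃ k, diagStage (k + 1))ᶜ := by
  ext p
  simp only [diagGraphon, diagStage, mem_ofPred_eq, mem_compl_iff, mem_iUnion, not_exists]
  constructor
  · intro h k
    by_contra hk
    rw [if_neg (fun hw => hw (k + 1) (Nat.le_add_left 1 k) hk)] at h
    exact one_ne_zero h
  · intro h
    rw [if_pos]
    intro n hn
    obtain ⟨k, rfl⟩ := Nat.exists_eq_add_of_le' hn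
    exact h k

lemma measurableSet_setOf_diagGraphon_eq_zero : MeasurableSet {p | diagGraphon p = 0} := by
  rw [setOf_diagGraphon_eq_zero]
  exact (MeasurableSet.iUnion fun k => measurableSet_diagStage (k + 1)).compl

lemma mu2_setOf_diagGraphon_eq_zero_ne_zero : mu2 {p | diagGraphon p = 0} ≠ 0 := by
  have hsum : ∑' k, mu2 (diagStage (k + 1)) = 1 := by
    simp_rw [mu2_diagStage, ENNReal.inv_pow]
    rw [ENNReal.tsum_geometric_add_one, ENNReal.one_sub_inv_two, inv_inv,
      ENNReal.inv_mul_cancel two_ne_zero ENNReal.ofNat_ne_top]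
  set s : ℕ → Set (ℝ × ℝ) := fun k => diagStage (k + 1)
  have hinter : mu2 (s 0 ∩ s 1) ≠ 0 := by
    have hzero (y : ℝ) (hy : y ∈ Ioo (0 : ℝ) 8⁻¹) : idx 1 y = 0 ∧ idx 2 y = 0 := by
      obtain ⟨hy₀, hy₁⟩ := hy
      refine ⟨idx_succ_eq_zero_of_mem 0 0 ?_, idx_succ_eq_zero_of_mem 1 0 ?_⟩ <;>
        norm_num [cexp] <;> constructor <;> linarith
    have hsq : Ioo (0 : ℝ) 8⁻¹ ×ˢ Ioo (0 : ℝ) 8⁻¹ ⊆ s 0 ∩ s 1 := by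
      rintro q ⟨hq₁, hq₂⟩
      exact ⟨(hzero _ hq₁).1.trans (hzero _ hq₂).1.symm,
        (hzero _ hq₁).2.trans (hzero _ hq₂).2.symm⟩
    have hI : muI (Ioo (0 : ℝ) 8⁻¹) ≠ 0 :=
      muI_ne_zero_of_isOpen isOpen_Ioo (nonempty_Ioo.2 (by norm_num))
        (Ioo_subset_Icc_self.trans (Icc_subset_Icc le_rfl (by norm_num)))
    refine ne_bot_of_le_ne_bot ?_ (measure_mono hsq)
    rw [mu2, Measure.prod_prod]
    exact mul_ne_zero hI hI
  have hlt : mu2 (⋃ k, s k) < 1 :=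
    calc mu2 (⋃ k, s k) < mu2 (⋃ k, s k) + mu2 (s 0 ∩ s 1) :=
          ENNReal.lt_add_right (measure_ne_top _ _) hinter
      _ ≤ 1 := hsum ▸ measure_iUnion_add_inter_le_tsum mu2 s (measurableSet_diagStage 2)
  rw [setOf_diagGraphon_eq_zero,
    prob_compl_eq_one_sub (MeasurableSet.iUnion fun k => measurableSet_diagStage (k + 1))]
  exact (tsub_pos_of_lt hlt).ne'

/-- In the recursive diagonal graphon, the black set is dense in `[0,1]²`, the white set
is nowhere dense, and consequently the graphon is not almost-everywhere continuous with
respect to the standard topology: it does not restrict to a continuous function on any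
full-measure subset of `[0,1]²`. -/
theorem diagGraphon_not_ae_continuous :
    (∀ p ∈ Set.Icc (0 : ℝ) 1 ×ˢ Set.Icc (0 : ℝ) 1,
      p ∈ closure {q ∈ Set.Icc (0 : ℝ) 1 ×ˢ Set.Icc (0 : ℝ) 1 | diagGraphon q = 1}) ∧
    interior (closure {q ∈ Set.Icc (0 : ℝ) 1 ×ˢ Set.Icc (0 : ℝ) 1 | diagGraphon q = 0}) = ∅ ∧
    ¬ ∃ X : Set (ℝ × ℝ), X ⊆ Set.Icc (0 : ℝ) 1 ×ˢ Set.Icc (0 : ℝ) 1 ∧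
        mu2 X = 1 ∧ ContinuousOn diagGraphon X := by
  refine ⟨fun p hp => ?_, ?_, ?_⟩
  · refine Metric.mem_closure_iff.2 fun ε hε => ?_
    obtain ⟨Q, -, hQε, hQ₀, hQ⟩ := exists_isOpen_black_near hp hε
    obtain ⟨q, hq⟩ := nonempty_of_measure_ne_zero hQ₀
    exact ⟨q, hQ hq, dist_comm p q ▸ hQε hq⟩
  · refine eq_empty_of_forall_notMem fun p hp => ?_
    obtain ⟨ε, hε, hpε⟩ := Metric.isOpen_iff.1 isOpen_interior p hp
    have hpI : p ∈ Icc (0 : ℝ) 1 ×ˢ Icc (0 : ℝ) 1 :=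
      closure_minimal (sep_subset _ _) (isClosed_Icc.prod isClosed_Icc) (interior_subset hp)
    obtain ⟨Q, hQo, hQε, hQ₀, hQ⟩ := exists_isOpen_black_near hpI hε
    obtain ⟨q, hq⟩ := nonempty_of_measure_ne_zero hQ₀
    obtain ⟨r, hr, hrQ⟩ := (closure_inter_open_nonempty_iff hQo).1
      ⟨q, interior_subset (hpε (hQε hq)), hq⟩
    exact one_ne_zero ((hQ hrQ).2.symm.trans hr.2)
  · rintro ⟨X, hXI, hX, hXf⟩
    obtain ⟨p, hpX, hp⟩ := inter_nonempty_of_measure_eq_one hX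
      measurableSet_setOf_diagGraphon_eq_zero mu2_setOf_diagGraphon_eq_zero_ne_zero
    obtain ⟨δ, hδ, hfδ⟩ := Metric.continuousWithinAt_iff.1 (hXf p hpX) 1 one_pos
    obtain ⟨Q, hQo, hQδ, hQ₀, hQ⟩ := exists_isOpen_black_near (hXI hpX) hδ
    obtain ⟨q, hqX, hqQ⟩ := inter_nonempty_of_measure_eq_one hX hQo.measurableSet hQ₀
    have hjump := hfδ hqX (hQδ hqQ)
    rw [(hQ hqQ).2, show diagGraphon p = 0 from hp, Real.dist_eq] at hjump
    norm_num at hjump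
end

section
/- Inductive step of the product-measure-zero lemma: suppose X_n, Y_n ⊆ [0,1] are finite unions of dyadic intervals of length 2^{-(2^n−1)}, and X_{n+1} ⊆ X_n, Y_{n+1} ⊆ Y_n are unions of dyadic intervals of length 2^{-(2^{n+1}−1)} such that for every component square I × J of X_n × Y_n one has λ(X_{n+1} ∩ I) + λ(Y_{n+1} ∩ J) ≤ λ(I). Then λ(X_{n+1} × Y_{n+1}) ≤ λ(X_n × Y_n)/4. -/
open MeasureTheory
open scoped ENNReal NNReal

lemma amgm4 {x y L : ℝ≥0∞} (hL : L ≠ ⊤) (h : x + y ≤ L) : x * y * 4 ≤ L * L := by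
  have hx : x ≠ ⊤ := ne_top_of_le_ne_top hL (le_trans le_self_add h)
  have hy : y ≠ ⊤ := ne_top_of_le_ne_top hL (le_trans le_add_self h)
  lift L to NNReal using hL
  lift x to NNReal using hx
  lift y to NNReal using hy
  have h' : x + y ≤ L := by exact_mod_cast h
  have : x * y * 4 ≤ L * L := by
    rw [← NNReal.coe_le_coe] at h' ⊢
    push_cast at h' ⊢
    nlinarith [sq_nonneg ((x : ℝ) - y), NNReal.coe_nonneg x, NNReal.coe_nonneg y]
  exact_mod_cast this

lemma dyadic_disjoint {ℓ : ℝ} (hℓ : 0 ≤ ℓ) {a b : ℤ} (hab : a ≠ b) :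
    Disjoint (Set.Ico ((a : ℝ) * ℓ) ((a + 1) * ℓ)) (Set.Ico ((b : ℝ) * ℓ) ((b + 1) * ℓ)) := by
  rw [Set.Ico_disjoint_Ico]
  rcases hab.lt_or_gt with h | h
  · have : ((a : ℝ) + 1) ≤ b := by exact_mod_cast h
    calc min ((a + 1 : ℝ) * ℓ) ((b + 1) * ℓ) ≤ (a + 1 : ℝ) * ℓ := min_le_left _ _
      _ ≤ (b : ℝ) * ℓ := mul_le_mul_of_nonneg_right this hℓ
      _ ≤ max ((a : ℝ) * ℓ) ((b : ℝ) * ℓ) := le_max_right _ _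
  · have : ((b : ℝ) + 1) ≤ a := by exact_mod_cast h
    calc min ((a + 1 : ℝ) * ℓ) ((b + 1) * ℓ) ≤ (b + 1 : ℝ) * ℓ := min_le_right _ _
      _ ≤ (a : ℝ) * ℓ := mul_le_mul_of_nonneg_right this hℓ
      _ ≤ max ((a : ℝ) * ℓ) ((b : ℝ) * ℓ) := le_max_left _ _

lemma dyadic_decomp {ℓ : ℝ} (hℓ : 0 ≤ ℓ) (A : Finset ℤ) {S : Set ℝ} (hS : MeasurableSet S)
    (hsub : S ⊆ ⋃ a ∈ A, Set.Ico ((a : ℝ) * ℓ) ((a + 1) * ℓ)) :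
    volume S = ∑ a ∈ A, volume (S ∩ Set.Ico ((a : ℝ) * ℓ) ((a + 1) * ℓ)) := by
  have hdisj : (A : Set ℤ).PairwiseDisjoint
      (fun a : ℤ => S ∩ Set.Ico ((a : ℝ) * ℓ) ((a + 1) * ℓ)) := by
    intro a _ b _ hab
    exact Disjoint.mono inf_le_right inf_le_right (dyadic_disjoint hℓ hab)
  rw [← measure_biUnion_finset hdisj (fun a _ => hS.inter measurableSet_Ico)]
  congr 1
  rw [← Set.inter_iUnion₂]
  exact (Set.inter_eq_left.mpr hsub).symm

/-- Inductive step of the product-measure-zero lemma: if `X, Y` are finite unions of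
dyadic intervals of length `2^{-(2^n - 1)}`, and `X' ⊆ X`, `Y' ⊆ Y` are finite unions of
dyadic intervals of length `2^{-(2^{n+1} - 1)}` such that for every component square
`I × J` of `X × Y` one has `λ(X' ∩ I) + λ(Y' ∩ J) ≤ λ(I)`, then
`λ(X' × Y') ≤ λ(X × Y) / 4`. -/
theorem product_measure_zero_step (n : ℕ) (A B A' B' : Finset ℤ)
    (X Y X' Y' : Set ℝ)
    (hX : X = ⋃ a ∈ A, Set.Ico ((a : ℝ) * 2⁻¹ ^ (2 ^ n - 1)) ((a + 1 : ℝ) * 2⁻¹ ^ (2 ^ n - 1)))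
    (hY : Y = ⋃ b ∈ B, Set.Ico ((b : ℝ) * 2⁻¹ ^ (2 ^ n - 1)) ((b + 1 : ℝ) * 2⁻¹ ^ (2 ^ n - 1)))
    (hX' : X' = ⋃ a ∈ A', Set.Ico ((a : ℝ) * 2⁻¹ ^ (2 ^ (n + 1) - 1))
      ((a + 1 : ℝ) * 2⁻¹ ^ (2 ^ (n + 1) - 1)))
    (hY' : Y' = ⋃ b ∈ B', Set.Ico ((b : ℝ) * 2⁻¹ ^ (2 ^ (n + 1) - 1))
      ((b + 1 : ℝ) * 2⁻¹ ^ (2 ^ (n + 1) - 1)))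
    (hX'X : X' ⊆ X) (hY'Y : Y' ⊆ Y)
    (hsq : ∀ a ∈ A, ∀ b ∈ B,
      volume (X' ∩ Set.Ico ((a : ℝ) * 2⁻¹ ^ (2 ^ n - 1)) ((a + 1 : ℝ) * 2⁻¹ ^ (2 ^ n - 1))) +
      volume (Y' ∩ Set.Ico ((b : ℝ) * 2⁻¹ ^ (2 ^ n - 1)) ((b + 1 : ℝ) * 2⁻¹ ^ (2 ^ n - 1))) ≤
      volume (Set.Ico ((a : ℝ) * 2⁻¹ ^ (2 ^ n - 1)) ((a + 1 : ℝ) * 2⁻¹ ^ (2 ^ n - 1)))) :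
    volume (X' ×ˢ Y') ≤ volume (X ×ˢ Y) / 4 := by
  set ℓ : ℝ := 2⁻¹ ^ (2 ^ n - 1) with hℓdef
  have hℓpos : 0 < ℓ := by positivity
  have hIvol : ∀ a : ℤ, volume (Set.Ico ((a : ℝ) * ℓ) ((a + 1) * ℓ)) = ENNReal.ofReal ℓ := by
    intro a
    rw [Real.volume_Ico]
    congr 1
    ring
  have hmX' : MeasurableSet X' := by
    rw [hX']
    exact A'.finite_toSet.measurableSet_biUnion (fun _ _ => measurableSet_Ico)
  have hmY' : MeasurableSet Y' := by
    rw [hY']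
    exact B'.finite_toSet.measurableSet_biUnion (fun _ _ => measurableSet_Ico)
  have hdX : volume X' = ∑ a ∈ A, volume (X' ∩ Set.Ico ((a : ℝ) * ℓ) ((a + 1) * ℓ)) :=
    dyadic_decomp hℓpos.le A hmX' (hX ▸ hX'X)
  have hdY : volume Y' = ∑ b ∈ B, volume (Y' ∩ Set.Ico ((b : ℝ) * ℓ) ((b + 1) * ℓ)) :=
    dyadic_decomp hℓpos.le B hmY' (hY ▸ hY'Y)
  have hvX : volume X = ∑ _a ∈ A, ENNReal.ofReal ℓ := by
    rw [dyadic_decomp hℓpos.le A (hX ▸ A.finite_toSet.measurableSet_biUnion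
      (fun _ _ => measurableSet_Ico)) (le_of_eq hX)]
    refine Finset.sum_congr rfl (fun a ha => ?_)
    rw [hX]
    have hsub : Set.Ico ((a : ℝ) * ℓ) ((a + 1) * ℓ) ⊆
        ⋃ a ∈ A, Set.Ico ((a : ℝ) * ℓ) ((a + 1) * ℓ) := fun x hx => Set.mem_biUnion ha hx
    rw [Set.inter_eq_right.mpr hsub, hIvol]
  have hvY : volume Y = ∑ _b ∈ B, ENNReal.ofReal ℓ := by
    rw [dyadic_decomp hℓpos.le B (hY ▸ B.finite_toSet.measurableSet_biUnion
      (fun _ _ => measurableSet_Ico)) (le_of_eq hY)]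
    refine Finset.sum_congr rfl (fun b hb => ?_)
    rw [hY]
    have hsub : Set.Ico ((b : ℝ) * ℓ) ((b + 1) * ℓ) ⊆
        ⋃ b ∈ B, Set.Ico ((b : ℝ) * ℓ) ((b + 1) * ℓ) := fun x hx => Set.mem_biUnion hb hx
    rw [Set.inter_eq_right.mpr hsub, hIvol]
  have hprod : volume (X' ×ˢ Y') = volume X' * volume Y' := by
    rw [Measure.volume_eq_prod, Measure.prod_prod]
  have hprod2 : volume (X ×ˢ Y) = volume X * volume Y := by
    rw [Measure.volume_eq_prod, Measure.prod_prod]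
  rw [hprod, hprod2, ENNReal.le_div_iff_mul_le (Or.inl (by norm_num)) (Or.inl (by norm_num))]
  calc volume X' * volume Y' * 4
      = ∑ a ∈ A, ∑ b ∈ B, (volume (X' ∩ Set.Ico ((a : ℝ) * ℓ) ((a + 1) * ℓ)) *
          volume (Y' ∩ Set.Ico ((b : ℝ) * ℓ) ((b + 1) * ℓ)) * 4) := by
        rw [hdX, hdY, Finset.sum_mul_sum, Finset.sum_mul]
        exact Finset.sum_congr rfl (fun a _ => by rw [Finset.sum_mul])
    _ ≤ ∑ a ∈ A, ∑ b ∈ B, ENNReal.ofReal ℓ * ENNReal.ofReal ℓ := by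
        refine Finset.sum_le_sum (fun a ha => Finset.sum_le_sum (fun b hb => ?_))
        exact amgm4 ENNReal.ofReal_ne_top (le_trans (hsq a ha b hb) (le_of_eq (hIvol a)))
    _ = volume X * volume Y := by
        rw [hvX, hvY, Finset.sum_mul_sum]
end
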